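/- Let H be a finite-dimensional complex inner product space and ∂, ∂̄ linear endomorphisms of H satisfying ∂² = ∂̄² = 0 and ∂∂̄ + ∂̄∂ = 0, with adjoints ∂*, ∂̄*. Then H admits the orthogonal direct sum decomposition H = ker □_A ⊕ (im ∂ + im ∂̄) ⊕ im((∂∂̄)*), whose three summands are pairwise orthogonal, and ker □_A = ker(∂∂̄) ∩ ker ∂* ∩ ker ∂̄*. -/

import Mathlib

open LinearMap

/-- The Aeppli Laplacian `□_A = ∂*∂̄*∂̄∂ + ∂̄∂∂*∂̄* + ∂̄∂*∂∂̄* + ∂∂̄*∂̄∂* + ∂̄∂̄* + ∂∂*`. -/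
noncomputable def aeppliLaplacian {H : Type*} [NormedAddCommGroup H] [InnerProductSpace ℂ H]
    [FiniteDimensional ℂ H] (d d' : Module.End ℂ H) : Module.End ℂ H :=
  adjoint d * adjoint d' * d' * d + d' * d * adjoint d * adjoint d'
    + d' * adjoint d * d * adjoint d' + d * adjoint d' * d' * adjoint d
    + d' * adjoint d' + d * adjoint d

section Aux

variable {H : Type*} [NormedAddCommGroup H] [InnerProductSpace ℂ H] [FiniteDimensional ℂ H]

private lemma key_iff (d d' : Module.End ℂ H)
    (hd : d * d = 0) (hd' : d' * d' = 0) (hdd' : d * d' + d' * d = 0) (x : H) :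
    aeppliLaplacian d d' x = 0 ↔ (d * d') x = 0 ∧ adjoint d x = 0 ∧ adjoint d' x = 0 := by
  have hanti : ∀ y : H, d (d' y) + d' (d y) = 0 := fun y => by
    simpa [LinearMap.add_apply, Module.End.mul_apply] using LinearMap.congr_fun hdd' y
  constructor
  · intro hx
    -- inner ℂ (□_A x) x is a sum of six squared norms
    have hsum : (inner ℂ (aeppliLaplacian d d' x) x : ℂ)
        = inner ℂ (d' (d x)) (d' (d x))
          + inner ℂ (adjoint d (adjoint d' x)) (adjoint d (adjoint d' x))
          + inner ℂ (d (adjoint d' x)) (d (adjoint d' x))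
          + inner ℂ (d' (adjoint d x)) (d' (adjoint d x))
          + inner ℂ (adjoint d' x) (adjoint d' x)
          + inner ℂ (adjoint d x) (adjoint d x) := by
      have t1 : (inner ℂ (adjoint d (adjoint d' (d' (d x)))) x : ℂ)
          = inner ℂ (d' (d x)) (d' (d x)) := by
        rw [adjoint_inner_left, adjoint_inner_left]
      have t2 : (inner ℂ (d' (d (adjoint d (adjoint d' x)))) x : ℂ)
          = inner ℂ (adjoint d (adjoint d' x)) (adjoint d (adjoint d' x)) := by
        rw [← adjoint_inner_right d', ← adjoint_inner_right d]
      have t3 : (inner ℂ (d' (adjoint d (d (adjoint d' x)))) x : ℂ)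
          = inner ℂ (d (adjoint d' x)) (d (adjoint d' x)) := by
        rw [← adjoint_inner_right d', adjoint_inner_left]
      have t4 : (inner ℂ (d (adjoint d' (d' (adjoint d x)))) x : ℂ)
          = inner ℂ (d' (adjoint d x)) (d' (adjoint d x)) := by
        rw [← adjoint_inner_right d, adjoint_inner_left]
      have t5 : (inner ℂ (d' (adjoint d' x)) x : ℂ)
          = inner ℂ (adjoint d' x) (adjoint d' x) := by
        rw [← adjoint_inner_right d']
      have t6 : (inner ℂ (d (adjoint d x)) x : ℂ)
          = inner ℂ (adjoint d x) (adjoint d x) := by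
        rw [← adjoint_inner_right d]
      simp only [aeppliLaplacian, LinearMap.add_apply, Module.End.mul_apply, inner_add_left,
        t1, t2, t3, t4, t5, t6]
    rw [hx, inner_zero_left] at hsum
    simp only [inner_self_eq_norm_sq_to_K] at hsum
    have hre : ‖d' (d x)‖ ^ 2 + ‖adjoint d (adjoint d' x)‖ ^ 2 + ‖d (adjoint d' x)‖ ^ 2
        + ‖d' (adjoint d x)‖ ^ 2 + ‖adjoint d' x‖ ^ 2 + ‖adjoint d x‖ ^ 2 = 0 := by
      rw [← Complex.ofReal_eq_zero]
      push_cast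
      exact hsum.symm
    have hz : ∀ y : H, ‖y‖ ^ 2 = 0 → y = 0 := fun y h => norm_eq_zero.mp (sq_eq_zero_iff.mp h)
    have n1 : d' (d x) = 0 := hz _ (by
      nlinarith [sq_nonneg ‖adjoint d (adjoint d' x)‖, sq_nonneg ‖d (adjoint d' x)‖,
        sq_nonneg ‖d' (adjoint d x)‖, sq_nonneg ‖adjoint d' x‖, sq_nonneg ‖adjoint d x‖])
    have na : adjoint d x = 0 := hz _ (by
      nlinarith [sq_nonneg ‖adjoint d (adjoint d' x)‖, sq_nonneg ‖d (adjoint d' x)‖,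
        sq_nonneg ‖d' (adjoint d x)‖, sq_nonneg ‖adjoint d' x‖, sq_nonneg ‖d' (d x)‖])
    have nb : adjoint d' x = 0 := hz _ (by
      nlinarith [sq_nonneg ‖adjoint d (adjoint d' x)‖, sq_nonneg ‖d (adjoint d' x)‖,
        sq_nonneg ‖d' (adjoint d x)‖, sq_nonneg ‖adjoint d x‖, sq_nonneg ‖d' (d x)‖])
    refine ⟨?_, na, nb⟩
    have := hanti x
    rw [n1, add_zero] at this
    simpa [Module.End.mul_apply] using this
  · rintro ⟨hc, ha, hb⟩
    have hc' : d (d' x) = 0 := by simpa [Module.End.mul_apply] using hc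
    have h21 : d' (d x) = 0 := by
      have := hanti x
      rw [hc', zero_add] at this
      exact this
    simp [aeppliLaplacian, LinearMap.add_apply, Module.End.mul_apply, ha, hb, h21, hc']

end Aux

/-- Let `H` be a finite-dimensional complex inner ℂ product space and `∂, ∂̄`
linear endomorphisms of `H` satisfying `∂² = ∂̄² = 0` and `∂∂̄ + ∂̄∂ = 0`, with adjoints
`∂*, ∂̄*`.  Then `H` admits the orthogonal direct sum decomposition
`H = ker □_A ⊕ (im ∂ + im ∂̄) ⊕ im((∂∂̄)*)` (where `(∂∂̄)* = ∂̄*∂*`), whose summands are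
pairwise orthogonal, and `ker □_A = ker(∂∂̄) ∩ ker ∂* ∩ ker ∂̄*`. -/
theorem hodge_decomposition_boxA {H : Type*} [NormedAddCommGroup H] [InnerProductSpace ℂ H]
    [FiniteDimensional ℂ H] (d d' : Module.End ℂ H)
    (hd : d * d = 0) (hd' : d' * d' = 0) (hdd' : d * d' + d' * d = 0) :
    LinearMap.ker (aeppliLaplacian d d') ⊔ (LinearMap.range d ⊔ LinearMap.range d')
        ⊔ LinearMap.range (adjoint d' * adjoint d) = ⊤ ∧
    (∀ x ∈ LinearMap.ker (aeppliLaplacian d d'),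
      ∀ y ∈ LinearMap.range d ⊔ LinearMap.range d', (inner ℂ x y : ℂ) = 0) ∧
    (∀ x ∈ LinearMap.ker (aeppliLaplacian d d'),
      ∀ z ∈ LinearMap.range (adjoint d' * adjoint d), (inner ℂ x z : ℂ) = 0) ∧
    (∀ y ∈ LinearMap.range d ⊔ LinearMap.range d',
      ∀ z ∈ LinearMap.range (adjoint d' * adjoint d), (inner ℂ y z : ℂ) = 0) ∧
    LinearMap.ker (aeppliLaplacian d d')
      = LinearMap.ker (d * d') ⊓ LinearMap.ker (adjoint d) ⊓ LinearMap.ker (adjoint d') := by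
  have key := key_iff d d' hd hd' hdd'
  have hanti : ∀ y : H, d (d' y) + d' (d y) = 0 := fun y => by
    simpa [LinearMap.add_apply, Module.End.mul_apply] using LinearMap.congr_fun hdd' y
  have hker : ∀ x, x ∈ LinearMap.ker (aeppliLaplacian d d') ↔
      d (d' x) = 0 ∧ adjoint d x = 0 ∧ adjoint d' x = 0 := by
    intro x
    rw [LinearMap.mem_ker, key x]
    simp [Module.End.mul_apply]
  have o1 : ∀ x ∈ LinearMap.ker (aeppliLaplacian d d'),
      ∀ y ∈ LinearMap.range d ⊔ LinearMap.range d', (inner ℂ x y : ℂ) = 0 := by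
    intro x hx y hy
    obtain ⟨a, ⟨u, rfl⟩, b, ⟨v, rfl⟩, rfl⟩ := Submodule.mem_sup.mp hy
    obtain ⟨-, ha, hb⟩ := (hker x).mp hx
    rw [inner_add_right, ← adjoint_inner_left, ← adjoint_inner_left, ha, hb,
      inner_zero_left, inner_zero_left, add_zero]
  have o2 : ∀ x ∈ LinearMap.ker (aeppliLaplacian d d'),
      ∀ z ∈ LinearMap.range (adjoint d' * adjoint d), (inner ℂ x z : ℂ) = 0 := by
    intro x hx z hz
    obtain ⟨w, rfl⟩ := hz
    obtain ⟨hc, -, -⟩ := (hker x).mp hx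
    rw [Module.End.mul_apply, adjoint_inner_right, adjoint_inner_right, hc, inner_zero_left]
  have o3 : ∀ y ∈ LinearMap.range d ⊔ LinearMap.range d',
      ∀ z ∈ LinearMap.range (adjoint d' * adjoint d), (inner ℂ y z : ℂ) = 0 := by
    intro y hy z hz
    obtain ⟨w, rfl⟩ := hz
    obtain ⟨a, ⟨u, rfl⟩, b, ⟨v, rfl⟩, rfl⟩ := Submodule.mem_sup.mp hy
    have hddu : d (d u) = 0 := by
      simpa [Module.End.mul_apply] using LinearMap.congr_fun hd u
    have h1 : d (d' (d u)) = 0 := by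
      have := hanti (d u)
      rw [hddu, map_zero, add_zero] at this
      exact this
    have h2 : d' (d' v) = 0 := by
      simpa [Module.End.mul_apply] using LinearMap.congr_fun hd' v
    rw [Module.End.mul_apply, inner_add_left, adjoint_inner_right, adjoint_inner_right,
      adjoint_inner_right, adjoint_inner_right, h1, h2]
    simp
  refine ⟨?_, o1, o2, o3, ?_⟩
  · rw [← Submodule.orthogonal_eq_bot_iff, Submodule.eq_bot_iff]
    intro x hx
    rw [Submodule.mem_orthogonal] at hx
    have ha : adjoint d x = 0 := by
      have h := hx (d (adjoint d x)) (Submodule.mem_sup_left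
        (Submodule.mem_sup_right (Submodule.mem_sup_left ⟨adjoint d x, rfl⟩)))
      rw [← adjoint_inner_right] at h
      exact inner_self_eq_zero.mp h
    have hb : adjoint d' x = 0 := by
      have h := hx (d' (adjoint d' x)) (Submodule.mem_sup_left
        (Submodule.mem_sup_right (Submodule.mem_sup_right ⟨adjoint d' x, rfl⟩)))
      rw [← adjoint_inner_right] at h
      exact inner_self_eq_zero.mp h
    have hc : d (d' x) = 0 := by
      have h := hx ((adjoint d' * adjoint d) (d (d' x)))
        (Submodule.mem_sup_right ⟨d (d' x), rfl⟩)
      rw [Module.End.mul_apply, adjoint_inner_left, adjoint_inner_left] at h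
      exact inner_self_eq_zero.mp h
    have hxker : x ∈ LinearMap.ker (aeppliLaplacian d d') := (hker x).mpr ⟨hc, ha, hb⟩
    have h := hx x (Submodule.mem_sup_left (Submodule.mem_sup_left hxker))
    exact inner_self_eq_zero.mp h
  · ext x
    rw [hker x]
    simp only [Submodule.mem_inf, LinearMap.mem_ker, Module.End.mul_apply]
    tauto
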